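/- More generally, the binomial-update loop expectation satisfies W (x, n, N) = x + (N - n)/2 for all n ≤ N, where W is the least solution of W (x,n,N) = (1/2)·W (x+1,n+1,N) + (1/2)·W (x,n+1,N) for n < N and W (x,n,N) = x for n ≥ N. -/

import Mathlib

/-! Each of the `N - n` remaining rounds adds `1/2` to the expected value, so induction on the
number of remaining rounds determines every solution of the recursion; in particular the least one. -/

open ENNReal

lemma ENNReal.half_mul_add_one_add_half_mul (a b : ℝ≥0∞) :
    1/2 * (a + 1 + b) + 1/2 * (a + b) = a + (b + 1/2) := by
  calc 1/2 * (a + 1 + b) + 1/2 * (a + b) = (1/2 + 1/2) * (a + b) + 1/2 := by ring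
    _ = a + (b + 1/2) := by rw [ENNReal.add_halves, one_mul, add_assoc]

lemma eq_add_div_two_of_binomial_recursion (W : ℕ × ℕ × ℕ → ℝ≥0∞)
    (hrec : ∀ x n N : ℕ, n < N →
      W (x, n, N) = (1/2) * W (x+1, n+1, N) + (1/2) * W (x, n+1, N))
    (hend : ∀ x n N : ℕ, N ≤ n → W (x, n, N) = (x : ℝ≥0∞)) (k : ℕ) :
    ∀ x n : ℕ, W (x, n, n + k) = (x : ℝ≥0∞) + (k : ℝ≥0∞) / 2 := by
  induction k with
  | zero => intro x n; simp [hend x n n le_rfl]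
  | succ k ih =>
    intro x n
    have hN : n + (k + 1) = n + 1 + k := by omega
    rw [hrec x n _ (by omega), hN, ih, ih, Nat.cast_succ x, Nat.cast_succ k, ENNReal.add_div,
      ENNReal.half_mul_add_one_add_half_mul]

theorem stmt_10_general (W : ℕ × ℕ × ℕ → ℝ≥0∞)
    (hrec : ∀ x n N : ℕ, n < N →
      W (x, n, N) = (1/2) * W (x+1, n+1, N) + (1/2) * W (x, n+1, N))
    (hend : ∀ x n N : ℕ, N ≤ n → W (x, n, N) = (x : ℝ≥0∞)) :
    ∀ x n N : ℕ, n ≤ N → W (x, n, N) = (x : ℝ≥0∞) + ((N - n : ℕ) : ℝ≥0∞) / 2 := by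
  intro x n N hle
  obtain ⟨k, rfl⟩ := Nat.exists_eq_add_of_le hle
  rw [Nat.add_sub_cancel_left]
  exact eq_add_div_two_of_binomial_recursion W hrec hend k x n

theorem stmt_10 (W : ℕ × ℕ × ℕ → ℝ≥0∞)
    (hrec : ∀ x n N : ℕ, n < N →
      W (x, n, N) = (1/2) * W (x+1, n+1, N) + (1/2) * W (x, n+1, N))
    (hend : ∀ x n N : ℕ, N ≤ n → W (x, n, N) = (x : ℝ≥0∞))
    (hleast : ∀ W' : ℕ × ℕ × ℕ → ℝ≥0∞,
      (∀ x n N : ℕ, n < N →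
        W' (x, n, N) = (1/2) * W' (x+1, n+1, N) + (1/2) * W' (x, n+1, N)) →
      (∀ x n N : ℕ, N ≤ n → W' (x, n, N) = (x : ℝ≥0∞)) → W ≤ W') :
    ∀ x n N : ℕ, n ≤ N → W (x, n, N) = (x : ℝ≥0∞) + ((N - n : ℕ) : ℝ≥0∞) / 2 :=
  stmt_10_general W hrec hend
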